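/- arXiv:2305.00700 — 6 statements merged into one kernel-verified Lean document; each statement's English description precedes it below -/
import Mathlib

section
/- Model averaging for interpolating linear regression: let X ∈ ℝ^{n×k} with k > n such that X and every submatrix X_{−j} (with column j deleted) have full row rank n. For Y ∈ ℝ^n, let β̂ be the minimum-norm solution of Xβ = Y, and for each j let β̂^{(−j)} ∈ ℝ^k be the minimum-norm least-squares estimate constrained to have j-th coordinate zero. Then with λ_j = (1 − X_jᵀ(XXᵀ)⁻¹X_j)/(k − n) one has λ_j ∈ [0,1], Σ_j λ_j = 1, and β̂ = Σ_{j=1}^k λ_j β̂^{(−j)}. -/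
open Matrix BigOperators

/-- The matrix `X` with column `j` deleted. -/
noncomputable def delCol {n k : ℕ} (X : Matrix (Fin n) (Fin k) ℝ) (j : Fin k) :
    Matrix (Fin n) {i : Fin k // i ≠ j} ℝ :=
  X.submatrix id Subtype.val

/-- Minimum-norm interpolating least-squares solution `Xᵀ(XXᵀ)⁻¹Y`. -/
noncomputable def minNorm {n : ℕ} {m : Type*} [Fintype m]
    (X : Matrix (Fin n) m ℝ) (Y : Fin n → ℝ) : m → ℝ :=
  Xᵀ *ᵥ ((X * Xᵀ)⁻¹ *ᵥ Y)

/-- Minimum-norm interpolating solution with column `j` deleted, embedded back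
into `ℝ^k` with a zero in coordinate `j`. -/
noncomputable def minNormDel {n k : ℕ} (X : Matrix (Fin n) (Fin k) ℝ) (j : Fin k)
    (Y : Fin n → ℝ) : Fin k → ℝ :=
  fun i => if h : i = j then 0 else minNorm (delCol X j) Y ⟨i, h⟩

/-!
Write `G = X Xᵀ` and `H = Xᵀ G⁻¹ X` for the hat matrix, the projection onto the row space of `X`.
Deleting column `j` is the rank-one downdate `G - X_j X_jᵀ`, whose determinant is
`det G · (1 - H_jj)`; full rank of `X_{-j}` thus gives `H_jj < 1`, and Sherman–Morrison gives
`β̂^{(-j)} = β̂ - β̂_j / (1 - H_jj) · (1 - H) e_j`. Averaging with the weights `(1 - H_jj)/(k - n)`,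
which sum to one because `tr H = n`, leaves `β̂ - (1 - H) β̂ / (k - n) = β̂`, since `H` fixes
`β̂ = Xᵀ G⁻¹ Y`.
-/

namespace Matrix

variable {m p K : Type*} [Fintype m] [DecidableEq m]

theorem isUnit_of_rank_eq_card [Field K] {M : Matrix m m K} (h : M.rank = Fintype.card m) :
    IsUnit M := by
  rw [← mulVec_surjective_iff_isUnit, ← coe_mulVecLin, ← LinearMap.range_eq_top]
  exact Submodule.eq_top_of_finrank_eq (by rw [Module.finrank_fintype_fun_eq_card, ← h, rank])

theorem posDef_self_mul_transpose_of_rank_eq_card [Fintype p] {A : Matrix m p ℝ}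
    (h : A.rank = Fintype.card m) : (A * Aᵀ).PosDef := by
  have hsemi := posSemidef_self_mul_conjTranspose A
  rw [conjTranspose_eq_transpose_of_trivial] at hsemi
  exact hsemi.posDef_iff_isUnit.mpr (isUnit_of_rank_eq_card (by rw [rank_self_mul_transpose, h]))

theorem det_sub_vecMulVec [CommRing K] {G : Matrix m m K} (hG : IsUnit G.det) (u v : m → K) :
    (G - vecMulVec u v).det = G.det * (1 - v ⬝ᵥ (G⁻¹ *ᵥ u)) := by
  have : G - vecMulVec u v = G + replicateCol Unit (-u) * replicateRow Unit v := by
    rw [← vecMulVec_eq, neg_vecMulVec, sub_eq_add_neg]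
  rw [this, det_add_replicateCol_mul_replicateRow hG]
  congr 1
  rw [det_unique, Matrix.mul_assoc, ← replicateCol_mulVec, add_apply, one_apply_eq,
    replicateRow_mul_replicateCol_apply, mulVec_neg, dotProduct_neg, sub_eq_add_neg]

theorem inv_sub_vecMulVec_mulVec [Field K] {G : Matrix m m K} (hG : IsUnit G.det) {u v : m → K}
    (h : 1 - v ⬝ᵥ (G⁻¹ *ᵥ u) ≠ 0) (y : m → K) :
    (G - vecMulVec u v)⁻¹ *ᵥ y =
      G⁻¹ *ᵥ y + (v ⬝ᵥ (G⁻¹ *ᵥ y) / (1 - v ⬝ᵥ (G⁻¹ *ᵥ u))) • (G⁻¹ *ᵥ u) := by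
  set z := G⁻¹ *ᵥ y + (v ⬝ᵥ (G⁻¹ *ᵥ y) / (1 - v ⬝ᵥ (G⁻¹ *ᵥ u))) • (G⁻¹ *ᵥ u)
  have hM : IsUnit (G - vecMulVec u v).det := by
    rw [det_sub_vecMulVec hG]; exact hG.mul h.isUnit
  have hz : (G - vecMulVec u v) *ᵥ z = y := by
    have hGG : ∀ w, G *ᵥ (G⁻¹ *ᵥ w) = w := fun w => by
      rw [mulVec_mulVec, mul_nonsing_inv _ hG, one_mulVec]
    rw [sub_mulVec, mulVec_add, mulVec_smul, hGG, hGG, vecMulVec_mulVec, dotProduct_add,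
      dotProduct_smul]
    ext i
    simp only [Pi.sub_apply, Pi.add_apply, Pi.smul_apply, op_smul_eq_smul, smul_eq_mul]
    field_simp
    ring
  calc (G - vecMulVec u v)⁻¹ *ᵥ y = (G - vecMulVec u v)⁻¹ *ᵥ ((G - vecMulVec u v) *ᵥ z) := by
        rw [hz]
    _ = z := by rw [mulVec_mulVec, nonsing_inv_mul _ hM, one_mulVec]

end Matrix

section HatMatrix

variable {m p K : Type*} [Fintype m] [Fintype p] [DecidableEq m] [CommRing K]

noncomputable def hatMatrix (X : Matrix m p K) : Matrix p p K := Xᵀ * (X * Xᵀ)⁻¹ * X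

theorem hatMatrix_apply (X : Matrix m p K) (i j : p) :
    hatMatrix X i j = Xᵀ i ⬝ᵥ ((X * Xᵀ)⁻¹ *ᵥ Xᵀ j) := by
  rw [hatMatrix, mul_apply', dotProduct_mulVec]
  rfl

theorem trace_hatMatrix {X : Matrix m p K} (hG : IsUnit (X * Xᵀ).det) :
    (hatMatrix X).trace = Fintype.card m := by
  rw [hatMatrix, trace_mul_comm, ← Matrix.mul_assoc, mul_nonsing_inv _ hG, trace_one]

theorem sum_one_sub_hatMatrix_diag {X : Matrix m p K} (hG : IsUnit (X * Xᵀ).det) :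
    ∑ j, (1 - hatMatrix X j j) = Fintype.card p - Fintype.card m := by
  rw [Finset.sum_sub_distrib, show ∑ j, hatMatrix X j j = (hatMatrix X).trace from rfl,
    trace_hatMatrix hG, Finset.sum_const, Finset.card_univ, nsmul_one]

theorem hatMatrix_mulVec_transpose_mulVec {X : Matrix m p K} (hG : IsUnit (X * Xᵀ).det)
    (z : m → K) : hatMatrix X *ᵥ (Xᵀ *ᵥ z) = Xᵀ *ᵥ z := by
  rw [hatMatrix, mulVec_mulVec, Matrix.mul_assoc, Matrix.mul_assoc, nonsing_inv_mul _ hG,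
    Matrix.mul_one]

end HatMatrix

theorem hatMatrix_diag_nonneg {m p : Type*} [Fintype m] [DecidableEq m] [Fintype p]
    {X : Matrix m p ℝ} (hG : (X * Xᵀ).PosDef) (j : p) : 0 ≤ hatMatrix X j j := by
  simpa [hatMatrix_apply] using hG.inv.posSemidef.dotProduct_mulVec_nonneg (Xᵀ j)

theorem delCol_mul_transpose {n k : ℕ} (X : Matrix (Fin n) (Fin k) ℝ) (j : Fin k) :
    delCol X j * (delCol X j)ᵀ = X * Xᵀ - vecMulVec (Xᵀ j) (Xᵀ j) := by
  ext a b
  rw [Matrix.sub_apply, mul_apply, mul_apply,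
    Fintype.sum_eq_add_sum_subtype_ne (fun i => X a i * Xᵀ i b) j]
  simp [delCol, vecMulVec_apply]

theorem hatMatrix_diag_lt_one {n k : ℕ} {X : Matrix (Fin n) (Fin k) ℝ} (hG : (X * Xᵀ).PosDef)
    {j : Fin k} (hj : (delCol X j).rank = n) : hatMatrix X j j < 1 := by
  have hGj := posDef_self_mul_transpose_of_rank_eq_card (by rwa [Fintype.card_fin])
  have hdet := hGj.det_pos
  rw [delCol_mul_transpose, det_sub_vecMulVec hG.det_pos.ne'.isUnit, ← hatMatrix_apply] at hdet
  linarith [(pos_iff_pos_of_mul_pos hdet).mp hG.det_pos]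

theorem minNorm_apply {n : ℕ} {m : Type*} [Fintype m] (X : Matrix (Fin n) m ℝ) (Y : Fin n → ℝ)
    (i : m) : minNorm X Y i = Xᵀ i ⬝ᵥ ((X * Xᵀ)⁻¹ *ᵥ Y) :=
  rfl

theorem minNormDel_eq {n k : ℕ} {X : Matrix (Fin n) (Fin k) ℝ} (hG : IsUnit (X * Xᵀ).det)
    {j : Fin k} (hj : hatMatrix X j j ≠ 1) (Y : Fin n → ℝ) :
    minNormDel X j Y =
      minNorm X Y - (minNorm X Y j / (1 - hatMatrix X j j)) • (1 - hatMatrix X)ᵀ j := by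
  have hden : 1 - hatMatrix X j j ≠ 0 := sub_ne_zero.mpr hj.symm
  ext i
  by_cases hij : i = j
  · subst hij
    simp [minNormDel, field]
  · have hrow : (delCol X j)ᵀ ⟨i, hij⟩ = Xᵀ i := rfl
    rw [minNormDel, dif_neg hij, minNorm_apply, delCol_mul_transpose, hrow,
      inv_sub_vecMulVec_mulVec hG (by rwa [← hatMatrix_apply]), dotProduct_add, dotProduct_smul,
      ← hatMatrix_apply X i j, ← hatMatrix_apply X j j, ← minNorm_apply, ← minNorm_apply]
    simp [one_apply_ne (Ne.symm hij)]

theorem sum_one_sub_hatMatrix_diag_div_eq_one {n k : ℕ} (hkn : n ≠ k)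
    {X : Matrix (Fin n) (Fin k) ℝ} (hG : IsUnit (X * Xᵀ).det) :
    ∑ j, (1 - hatMatrix X j j) / ((k : ℝ) - n) = 1 := by
  rw [← Finset.sum_div, sum_one_sub_hatMatrix_diag hG, Fintype.card_fin, Fintype.card_fin,
    div_self (sub_ne_zero.mpr (by exact_mod_cast hkn.symm))]

theorem minNorm_eq_sum_smul_minNormDel {n k : ℕ} (hkn : n ≠ k) {X : Matrix (Fin n) (Fin k) ℝ}
    (hG : IsUnit (X * Xᵀ).det) (hlev : ∀ j, hatMatrix X j j ≠ 1) (Y : Fin n → ℝ) :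
    minNorm X Y = ∑ j, ((1 - hatMatrix X j j) / ((k : ℝ) - n)) • minNormDel X j Y := by
  have hcoef : ∀ j, (1 - hatMatrix X j j) / ((k : ℝ) - n) *
      (minNorm X Y j / (1 - hatMatrix X j j)) = ((k : ℝ) - n)⁻¹ * minNorm X Y j := fun j => by
    field_simp [sub_ne_zero.mpr (hlev j).symm]
  have hfix : (1 - hatMatrix X) *ᵥ minNorm X Y = 0 := by
    rw [sub_mulVec, one_mulVec, minNorm, hatMatrix_mulVec_transpose_mulVec hG, sub_self]
  simp_rw [minNormDel_eq hG (hlev _), smul_sub, smul_smul, hcoef, Finset.sum_sub_distrib,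
    ← Finset.sum_smul, sum_one_sub_hatMatrix_diag_div_eq_one hkn hG, one_smul, ← smul_smul,
    ← Finset.smul_sum, ← vecMul_eq_sum, vecMul_transpose, hfix, smul_zero, sub_zero]

/-- Model averaging for interpolating linear least-squares regression:
the minimum-norm interpolating solution is a convex combination of the
leave-one-covariate-out minimum-norm solutions, with leverage-based weights. -/
theorem model_averaging_interpolating_ols {n k : ℕ} (hkn : n < k)
    (X : Matrix (Fin n) (Fin k) ℝ) (hX : X.rank = n)
    (hXd : ∀ j : Fin k, (delCol X j).rank = n) (Y : Fin n → ℝ) :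
    (∀ j : Fin k,
        (1 - (fun i => X i j) ⬝ᵥ ((X * Xᵀ)⁻¹ *ᵥ fun i => X i j)) / ((k : ℝ) - n)
          ∈ Set.Icc (0 : ℝ) 1) ∧
    (∑ j : Fin k,
        (1 - (fun i => X i j) ⬝ᵥ ((X * Xᵀ)⁻¹ *ᵥ fun i => X i j)) / ((k : ℝ) - n) = 1) ∧
    minNorm X Y =
      ∑ j : Fin k,
        ((1 - (fun i => X i j) ⬝ᵥ ((X * Xᵀ)⁻¹ *ᵥ fun i => X i j)) / ((k : ℝ) - n))
          • minNormDel X j Y := by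
  have hG : (X * Xᵀ).PosDef :=
    posDef_self_mul_transpose_of_rank_eq_card (by rwa [Fintype.card_fin])
  have hGu : IsUnit (X * Xᵀ).det := hG.det_pos.ne'.isUnit
  have hlev : ∀ j, hatMatrix X j j < 1 := fun j => hatMatrix_diag_lt_one hG (hXd j)
  have hkn_one : (1 : ℝ) ≤ k - n := by
    rw [le_sub_iff_add_le']; exact_mod_cast hkn
  have hleverage : ∀ j, (fun i => X i j) ⬝ᵥ ((X * Xᵀ)⁻¹ *ᵥ fun i => X i j) = hatMatrix X j j :=
    fun j => (hatMatrix_apply X j j).symm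
  simp only [hleverage]
  refine ⟨fun j => ⟨?_, ?_⟩, sum_one_sub_hatMatrix_diag_div_eq_one hkn.ne hGu,
    minNorm_eq_sum_smul_minNormDel hkn.ne hGu (fun j => (hlev j).ne) Y⟩
  · exact div_nonneg (sub_nonneg.mpr (hlev j).le) (by linarith)
  · rw [div_le_one (by linarith)]
    linarith [hatMatrix_diag_nonneg hG j]
end

section
/- Variation hierarchy above the interpolation threshold: let X ∈ ℝ^{n×k} with k > n, such that X and each X_{−j} have full row rank. For Y_A, Y_B ∈ ℝ^n let β̂_A, β̂_B be the minimum-norm interpolating solutions on X, and β̂^{(−j)}_A, β̂^{(−j)}_B those on X_{−j} (embedded with zero j-th coordinate). Then ‖β̂_A − β̂_B‖ ≤ ‖β̂^{(−j)}_A − β̂^{(−j)}_B‖ for every j. -/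
/-!
Every interpolating vector `b` (with `X b = Y`) splits orthogonally as `b = β̂ + (b - β̂)`:
`β̂ = Xᵀ (X Xᵀ)⁻¹ Y` lies in the row space of `X`, while `X (b - β̂) = 0`. Hence `β̂` has the
least Euclidean norm among all interpolators. The leave-one-out solutions, padded with a zero,
interpolate on `X` as well, and `β̂` depends linearly on `Y`, so applying this to `Y_A - Y_B`
with `b = β̂_A^{(-j)} - β̂_B^{(-j)}` gives the theorem.
-/

open Matrix BigOperators

theorem Matrix.isUnit_of_rank_eq_card_s5 {m K : Type*} [Fintype m] [DecidableEq m] [Field K]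
    {A : Matrix m m K} (h : A.rank = Fintype.card m) : IsUnit A := by
  rw [← mulVec_surjective_iff_isUnit]
  change Function.Surjective A.mulVecLin
  rw [← LinearMap.range_eq_top]
  apply Submodule.eq_top_of_finrank_eq
  rw [← Matrix.rank, h, Module.finrank_fintype_fun_eq_card]

theorem Matrix.isUnit_mul_transpose_of_rank_eq_card {m p R : Type*} [Fintype m] [Fintype p]
    [DecidableEq m] [Field R] [LinearOrder R] [IsStrictOrderedRing R] {X : Matrix m p R}
    (h : X.rank = Fintype.card m) : IsUnit (X * Xᵀ) :=
  isUnit_of_rank_eq_card_s5 (by rw [rank_self_mul_transpose, h])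

theorem Matrix.dotProduct_self_transpose_mulVec_le {m p R : Type*} [Fintype m] [Fintype p]
    [CommRing R] [LinearOrder R] [IsStrictOrderedRing R] {X : Matrix m p R} {w : m → R}
    {b : p → R} (h : X *ᵥ b = X *ᵥ (Xᵀ *ᵥ w)) :
    (Xᵀ *ᵥ w) ⬝ᵥ (Xᵀ *ᵥ w) ≤ b ⬝ᵥ b := by
  have hker : X *ᵥ (b - Xᵀ *ᵥ w) = 0 := by rw [mulVec_sub, h, sub_self]
  have horth : (Xᵀ *ᵥ w) ⬝ᵥ (b - Xᵀ *ᵥ w) = 0 := by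
    rw [mulVec_transpose, ← dotProduct_mulVec, ← mulVec_transpose, hker, dotProduct_zero]
  set β := Xᵀ *ᵥ w
  have hsplit : b ⬝ᵥ b = β ⬝ᵥ β + 2 * (β ⬝ᵥ (b - β)) + (b - β) ⬝ᵥ (b - β) := by
    simp only [dotProduct_sub, sub_dotProduct, dotProduct_comm b β]
    ring
  have hnonneg : 0 ≤ (b - β) ⬝ᵥ (b - β) :=
    Finset.sum_nonneg fun i _ => mul_self_nonneg _
  rw [hsplit, horth]
  linarith

theorem mulVec_minNorm {n : ℕ} {m : Type*} [Fintype m] {X : Matrix (Fin n) m ℝ}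
    (hX : X.rank = n) (Y : Fin n → ℝ) : X *ᵥ minNorm X Y = Y := by
  have hG := isUnit_mul_transpose_of_rank_eq_card (X := X) (by rwa [Fintype.card_fin])
  rw [minNorm, mulVec_mulVec, mulVec_mulVec,
    mul_nonsing_inv _ ((isUnit_iff_isUnit_det _).mp hG), one_mulVec]

theorem minNorm_sub {n : ℕ} {m : Type*} [Fintype m] (X : Matrix (Fin n) m ℝ)
    (Y Y' : Fin n → ℝ) : minNorm X Y - minNorm X Y' = minNorm X (Y - Y') := by
  simp only [minNorm, mulVec_sub]

theorem minNorm_dotProduct_self_le {n : ℕ} {m : Type*} [Fintype m] {X : Matrix (Fin n) m ℝ}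
    (hX : X.rank = n) {Y : Fin n → ℝ} {b : m → ℝ} (hb : X *ᵥ b = Y) :
    minNorm X Y ⬝ᵥ minNorm X Y ≤ b ⬝ᵥ b :=
  dotProduct_self_transpose_mulVec_le (by rw [hb]; exact (mulVec_minNorm hX Y).symm)

theorem mulVec_minNormDel {n k : ℕ} (X : Matrix (Fin n) (Fin k) ℝ) (j : Fin k)
    (Y : Fin n → ℝ) : X *ᵥ minNormDel X j Y = delCol X j *ᵥ minNorm (delCol X j) Y := by
  ext r
  rw [mulVec, dotProduct, Fintype.sum_eq_add_sum_subtype_ne _ j, minNormDel, dif_pos rfl,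
    mul_zero, zero_add]
  exact Finset.sum_congr rfl fun i _ => by simp only [minNormDel, dif_neg i.2]; rfl

theorem variation_hierarchy_above_general {n k : ℕ}
    (X : Matrix (Fin n) (Fin k) ℝ) (hX : X.rank = n)
    (hXd : ∀ j : Fin k, (delCol X j).rank = n)
    (Y_A Y_B : Fin n → ℝ) (j : Fin k) :
    Real.sqrt (∑ i, (minNorm X Y_A i - minNorm X Y_B i) ^ 2) ≤
      Real.sqrt (∑ i, (minNormDel X j Y_A i - minNormDel X j Y_B i) ^ 2) := by
  have hinterp : X *ᵥ (minNormDel X j Y_A - minNormDel X j Y_B) = Y_A - Y_B := by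
    rw [mulVec_sub, mulVec_minNormDel, mulVec_minNormDel, mulVec_minNorm (hXd j),
      mulVec_minNorm (hXd j)]
  have hle := minNorm_dotProduct_self_le hX hinterp
  rw [← minNorm_sub] at hle
  simpa only [dotProduct, Pi.sub_apply, sq] using Real.sqrt_le_sqrt hle

/-- Variation hierarchy above the interpolation threshold: in Euclidean norm,
the variation of the minimum-norm interpolating solution across two outcome
draws is at most that of any leave-one-covariate-out solution. -/
theorem variation_hierarchy_above {n k : ℕ} (hkn : n < k)
    (X : Matrix (Fin n) (Fin k) ℝ) (hX : X.rank = n)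
    (hXd : ∀ j : Fin k, (delCol X j).rank = n)
    (Y_A Y_B : Fin n → ℝ) (j : Fin k) :
    Real.sqrt (∑ i, (minNorm X Y_A i - minNorm X Y_B i) ^ 2) ≤
      Real.sqrt (∑ i, (minNormDel X j Y_A i - minNormDel X j Y_B i) ^ 2) :=
  variation_hierarchy_above_general X hX hXd Y_A Y_B j
end

section
/- Model-agnostic risk bound: let J be a finite index set, let λ̂ : Ω → [0,1]^J be a (random) weight vector summing to 1, and f̂_j : Ω → (𝒳 → ℝ) random functions, with f̂* = Σ_j λ̂_j f̂_j. Suppose for every permutation π of J, E[(y − f̂*(x))²] ≤ E[(y − f̂*_π(x))²] where f̂*_π = Σ_j λ̂_{π(j)} f̂_j. Then E[(y − f̂*(x))²] ≤ (1/|J|) Σ_{j∈J} E[(y − f̂_j(x))²]. -/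
/-!
Jensen's inequality bounds the loss of every permuted convex combination pointwise by the
correspondingly weighted average of the individual losses. Averaging over all permutations,
each model receives the average weight `1 / |J|`, so the average risk of the permuted
combinations is at most the equal-weighted average risk; the realized combination is no
worse than any permuted one, hence no worse than their average.
-/

open BigOperators MeasureTheory

theorem Equiv.Perm.card_nsmul_sum_apply {J M : Type*} [Fintype J] [DecidableEq J]
    [AddCommMonoid M] (g : J → M) (j : J) :
    Fintype.card J • ∑ π : Equiv.Perm J, g (π j) =
      Fintype.card (Equiv.Perm J) • ∑ k, g k := by
  have h_indep : ∀ k, ∑ π : Equiv.Perm J, g (π k) = ∑ π : Equiv.Perm J, g (π j) :=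
    fun k =>
      (Equiv.sum_comp (Equiv.mulRight (Equiv.swap j k)) (fun π => g (π k))).symm.trans
        (by simp)
  calc Fintype.card J • ∑ π : Equiv.Perm J, g (π j)
      = ∑ k, ∑ π : Equiv.Perm J, g (π k) := by simp [h_indep]
    _ = ∑ π : Equiv.Perm J, ∑ k, g (π k) := Finset.sum_comm
    _ = Fintype.card (Equiv.Perm J) • ∑ k, g k := by simp [Equiv.sum_comp]

theorem sq_sub_sum_mul_le_sum_mul_sq {ι : Type*} {s : Finset ι} {w : ι → ℝ} (a : ι → ℝ)
    (b : ℝ) (hw₀ : ∀ i ∈ s, 0 ≤ w i) (hw₁ : ∑ i ∈ s, w i = 1) :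
    (b - ∑ i ∈ s, w i * a i) ^ 2 ≤ ∑ i ∈ s, w i * (b - a i) ^ 2 := by
  have h_comb : b - ∑ i ∈ s, w i * a i = ∑ i ∈ s, w i * (b - a i) := by
    simp only [mul_sub, Finset.sum_sub_distrib, ← Finset.sum_mul, hw₁, one_mul]
  rw [h_comb]
  simpa using (Even.convexOn_pow (n := 2) even_two).map_sum_le hw₀ hw₁
    (fun i _ => Set.mem_univ (b - a i))

theorem card_mul_sum_perm_sq_sub_le {J : Type*} [Fintype J] [DecidableEq J] {w : J → ℝ}
    (a : J → ℝ) (b : ℝ) (hw₀ : ∀ j, 0 ≤ w j) (hw₁ : ∑ j, w j = 1) :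
    (Fintype.card J : ℝ) * ∑ π : Equiv.Perm J, (b - ∑ j, w (π j) * a j) ^ 2 ≤
      Fintype.card (Equiv.Perm J) * ∑ j, (b - a j) ^ 2 := by
  have h_avg : ∀ j, (Fintype.card J : ℝ) * ∑ π : Equiv.Perm J, w (π j) =
      Fintype.card (Equiv.Perm J) := fun j => by
    simpa [nsmul_eq_mul, hw₁] using Equiv.Perm.card_nsmul_sum_apply w j
  calc (Fintype.card J : ℝ) * ∑ π : Equiv.Perm J, (b - ∑ j, w (π j) * a j) ^ 2
      ≤ Fintype.card J * ∑ π : Equiv.Perm J, ∑ j, w (π j) * (b - a j) ^ 2 := by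
        gcongr with π
        exact sq_sub_sum_mul_le_sum_mul_sq a b (fun j _ => hw₀ (π j))
          ((Equiv.sum_comp π w).trans hw₁)
    _ = ∑ j, ((Fintype.card J : ℝ) * ∑ π : Equiv.Perm J, w (π j)) * (b - a j) ^ 2 := by
        rw [Finset.sum_comm, Finset.mul_sum]
        simp only [Finset.sum_mul, Finset.mul_sum, mul_assoc]
    _ = Fintype.card (Equiv.Perm J) * ∑ j, (b - a j) ^ 2 := by
        simp only [h_avg, Finset.mul_sum]

theorem model_agnostic_risk_bound_general {J : Type*} [Fintype J] [Nonempty J]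
    {𝒳 : Type*} {Ω : Type*} [MeasurableSpace Ω]
    (μ : Measure Ω)
    (lam : Ω → J → ℝ) (f : J → Ω → 𝒳 → ℝ) (y : Ω → ℝ) (x : Ω → 𝒳)
    (hlam : ∀ᵐ ω ∂μ, (∀ j, lam ω j ∈ Set.Icc (0 : ℝ) 1) ∧ ∑ j, lam ω j = 1)
    (hint : ∀ j, Integrable (fun ω => (y ω - f j ω (x ω)) ^ 2) μ)
    (hintπ : ∀ π : Equiv.Perm J,
      Integrable (fun ω => (y ω - ∑ j, lam ω (π j) * f j ω (x ω)) ^ 2) μ)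
    (hperm : ∀ π : Equiv.Perm J,
      ∫ ω, (y ω - ∑ j, lam ω j * f j ω (x ω)) ^ 2 ∂μ ≤
        ∫ ω, (y ω - ∑ j, lam ω (π j) * f j ω (x ω)) ^ 2 ∂μ) :
    ∫ ω, (y ω - ∑ j, lam ω j * f j ω (x ω)) ^ 2 ∂μ ≤
      (1 / (Fintype.card J : ℝ)) * ∑ j, ∫ ω, (y ω - f j ω (x ω)) ^ 2 ∂μ := by
  classical
  set n : ℝ := (Fintype.card J : ℝ)
  set N : ℝ := (Fintype.card (Equiv.Perm J) : ℝ)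
  set R := ∫ ω, (y ω - ∑ j, lam ω j * f j ω (x ω)) ^ 2 ∂μ
  have h_pointwise : ∀ᵐ ω ∂μ,
      n * ∑ π : Equiv.Perm J, (y ω - ∑ j, lam ω (π j) * f j ω (x ω)) ^ 2 ≤
        N * ∑ j, (y ω - f j ω (x ω)) ^ 2 := by
    filter_upwards [hlam] with ω ⟨h_mem, h_sum⟩
    exact card_mul_sum_perm_sq_sub_le _ _ (fun j => (h_mem j).1) h_sum
  have h_risk : n * (N * R) ≤ N * ∑ j, ∫ ω, (y ω - f j ω (x ω)) ^ 2 ∂μ :=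
    calc n * (N * R) = n * ∑ _π : Equiv.Perm J, R := by simp [N]
      _ ≤ n * ∑ π : Equiv.Perm J,
            ∫ ω, (y ω - ∑ j, lam ω (π j) * f j ω (x ω)) ^ 2 ∂μ := by
          gcongr with π
          exact hperm π
      _ = ∫ ω, n * ∑ π : Equiv.Perm J,
            (y ω - ∑ j, lam ω (π j) * f j ω (x ω)) ^ 2 ∂μ := by
          rw [integral_const_mul, integral_finsetSum _ fun π _ => hintπ π]
      _ ≤ ∫ ω, N * ∑ j, (y ω - f j ω (x ω)) ^ 2 ∂μ :=
          integral_mono_ae ((integrable_finsetSum _ fun π _ => hintπ π).const_mul n)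
            ((integrable_finsetSum _ fun j _ => hint j).const_mul N) h_pointwise
      _ = N * ∑ j, ∫ ω, (y ω - f j ω (x ω)) ^ 2 ∂μ := by
          rw [integral_const_mul, integral_finsetSum _ fun j _ => hint j]
  have hn : 0 < n := Nat.cast_pos.mpr Fintype.card_pos
  have hN : 0 < N := Nat.cast_pos.mpr Fintype.card_pos
  rw [one_div, ← div_eq_inv_mul, le_div_iff₀ hn]
  exact le_of_mul_le_mul_left (by linarith) hN

/-- Model-agnostic risk bound: if the realized weighting is (in expectation) no
worse than any permuted weighting, then the risk of the model average is at most
the equal-weighted average of the risks of the simple models. -/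
theorem model_agnostic_risk_bound {J : Type*} [Fintype J] [Nonempty J]
    {𝒳 : Type*} {Ω : Type*} [MeasurableSpace Ω]
    (μ : Measure Ω) [IsProbabilityMeasure μ]
    (lam : Ω → J → ℝ) (f : J → Ω → 𝒳 → ℝ) (y : Ω → ℝ) (x : Ω → 𝒳)
    (hlam : ∀ᵐ ω ∂μ, (∀ j, lam ω j ∈ Set.Icc (0 : ℝ) 1) ∧ ∑ j, lam ω j = 1)
    (hint : ∀ j, Integrable (fun ω => (y ω - f j ω (x ω)) ^ 2) μ)
    (hintπ : ∀ π : Equiv.Perm J,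
      Integrable (fun ω => (y ω - ∑ j, lam ω (π j) * f j ω (x ω)) ^ 2) μ)
    (hperm : ∀ π : Equiv.Perm J,
      ∫ ω, (y ω - ∑ j, lam ω j * f j ω (x ω)) ^ 2 ∂μ ≤
        ∫ ω, (y ω - ∑ j, lam ω (π j) * f j ω (x ω)) ^ 2 ∂μ) :
    ∫ ω, (y ω - ∑ j, lam ω j * f j ω (x ω)) ^ 2 ∂μ ≤
      (1 / (Fintype.card J : ℝ)) * ∑ j, ∫ ω, (y ω - f j ω (x ω)) ^ 2 ∂μ :=
  model_agnostic_risk_bound_general μ lam f y x hlam hint hintπ hperm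
end

section
/- Model averaging for synthetic control (fitted values, via Farkas): let X ∈ ℝ^{T×N}, let ȳ ∈ ℝ^T, and for each subset S ⊆ J let ŵ^S be the unique minimizer of ‖Xw − ȳ‖² over the simplex 𝒲^S when the minimizer is unique (e.g. after an arbitrarily small ridge perturbation making the objective strictly convex in w). If |J| ≥ 2, then there exist λ_j ≥ 0, j ∈ J, such that Xŵ^J = Σ_{j∈J} λ_j Xŵ^{J∖{j}}. -/
open Matrix BigOperators

/-- The simplex of convex weight vectors supported on `J`. -/
def simplexW {N : ℕ} (J : Finset (Fin N)) : Set (Fin N → ℝ) :=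
  {w | (∀ i, w i ∈ Set.Icc (0 : ℝ) 1) ∧ (∑ i, w i) = 1 ∧ ∀ j ∉ J, w j = 0}

/-!
Write `A w = X *ᵥ w` and `ŷ = A wJ`, and let `p` be the point of the convex hull of the
leave-one-out fits `A (wdel j)` closest to `ŷ`. Then `‖p - ŷ‖² ≤ ⟪p - ŷ, A (wdel j) - ŷ⟫` for
every `j ∈ J`, so it suffices to find one `j` for which the right-hand side is `≤ 0`. If some
weight `wJ j` vanishes, `wJ` is also optimal on `J ∖ {j}` and `A (wdel j) = ŷ`. Otherwise `wJ`
lies in the relative interior of the simplex, so the residual `ŷ - ybar` is orthogonal to the whole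
face; the ray from the weights of `p` through `wJ` leaves the simplex through some facet
`J ∖ {j}`, and the optimality of `wdel j` on that facet gives the sign.
-/

open Set
open scoped RealInnerProductSpace

namespace simplexW
variable {N : ℕ} {S S' : Finset (Fin N)} {w : Fin N → ℝ}

lemma mem_of_nonneg (h0 : ∀ i, 0 ≤ w i) (h1 : ∑ i, w i = 1) (hS : ∀ j ∉ S, w j = 0) :
    w ∈ simplexW S :=
  ⟨fun i => ⟨h0 i, h1 ▸ Finset.single_le_sum (fun j _ => h0 j) (Finset.mem_univ i)⟩, h1, hS⟩

lemma eq_stdSimplex_inter : simplexW S = stdSimplex ℝ (Fin N) ∩ {w | ∀ j ∉ S, w j = 0} := by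
  ext w
  exact ⟨fun ⟨h0, h1, hS⟩ => ⟨⟨fun i => (h0 i).1, h1⟩, hS⟩,
    fun ⟨⟨h0, h1⟩, hS⟩ => mem_of_nonneg h0 h1 hS⟩

lemma convex : Convex ℝ (simplexW S) := by
  rw [eq_stdSimplex_inter]
  refine (convex_stdSimplex ℝ _).inter fun v hv u hu a b _ _ _ j hj => ?_
  simp [hv j hj, hu j hj]

lemma isCompact : IsCompact (simplexW S) := by
  rw [eq_stdSimplex_inter]
  refine (isCompact_stdSimplex ℝ (Fin N)).inter_right ?_
  simp only [ofPred_forall]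
  exact isClosed_iInter fun j => isClosed_iInter fun _ =>
    isClosed_eq (continuous_apply j) continuous_const

lemma mono (h : S ⊆ S') : simplexW S ⊆ simplexW S' :=
  fun _ ⟨h0, h1, hS⟩ => ⟨h0, h1, fun j hj => hS j fun hjS => hj (h hjS)⟩

lemma single_mem {j : Fin N} (hj : j ∈ S) : Pi.single j 1 ∈ simplexW S :=
  mem_of_nonneg (fun i => by by_cases h : i = j <;> simp [h]) (by simp)
    (fun k hk => by simp [show k ≠ j from fun h => hk (h ▸ hj)])

lemma sum_eq_one (hw : w ∈ simplexW S) : ∑ i ∈ S, w i = 1 := by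
  rw [← hw.2.1]
  exact Finset.sum_subset S.subset_univ fun k _ hk => hw.2.2 k hk

lemma nonempty_of_mem (hw : w ∈ simplexW S) : S.Nonempty := by
  rw [Finset.nonempty_iff_ne_empty]
  rintro rfl
  simpa using sum_eq_one hw

lemma mem_erase_of_eq_zero {j : Fin N} (hw : w ∈ simplexW S) (hj : w j = 0) :
    w ∈ simplexW (S.erase j) := by
  refine ⟨hw.1, hw.2.1, fun k hk => ?_⟩
  by_cases hkj : k = j
  · exact hkj ▸ hj
  · exact hw.2.2 k fun hkS => hk (Finset.mem_erase.2 ⟨hkj, hkS⟩)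

lemma exists_add_smul_sub_mem_erase {u : Fin N → ℝ} (hw : w ∈ simplexW S)
    (hpos : ∀ i ∈ S, 0 < w i) (hu : u ∈ simplexW S) (hne : u ≠ w) :
    ∃ j ∈ S, ∃ t : ℝ, 0 < t ∧ w + t • (w - u) ∈ simplexW (S.erase j) := by
  obtain ⟨j, hj, hmax⟩ :=
    Finset.exists_max_image S (fun i => (u i - w i) / w i) (nonempty_of_mem hw)
  set r := (u j - w j) / w j
  have hle : ∀ i, u i - w i ≤ r * w i := fun i => by
    by_cases hi : i ∈ S
    · exact (div_le_iff₀ (hpos i hi)).1 (hmax i hi)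
    · simp [hu.2.2 i hi, hw.2.2 i hi]
  have hr : 0 < r := by
    by_contra! hr
    have hle' : ∀ i ∈ Finset.univ, u i ≤ w i := fun i _ => by
      nlinarith [hle i, hw.1 i |>.1]
    exact hne (funext fun i => (Finset.sum_eq_sum_iff_of_le hle').1
      (hu.2.1.trans hw.2.1.symm) i (Finset.mem_univ i))
  refine ⟨j, hj, r⁻¹, inv_pos.2 hr, mem_of_nonneg (fun i => ?_) ?_ fun k hk => ?_⟩
  · have := mul_le_mul_of_nonneg_left (hle i) (inv_pos.2 hr).le
    rw [inv_mul_cancel_left₀ hr.ne'] at this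
    simp only [Pi.add_apply, Pi.smul_apply, Pi.sub_apply, smul_eq_mul]
    nlinarith
  · simp [Finset.sum_add_distrib, ← Finset.mul_sum, hw.2.1, hu.2.1]
  · rcases eq_or_ne k j with rfl | hkj
    · have hrk : u k - w k = r * w k := (div_mul_cancel₀ _ (hpos k hj).ne').symm
      simp only [Pi.add_apply, Pi.smul_apply, Pi.sub_apply, smul_eq_mul]
      rw [← neg_sub, hrk, mul_neg, inv_mul_cancel_left₀ hr.ne', add_neg_cancel]
    · have hkS : k ∉ S := fun hkS => hk (Finset.mem_erase.2 ⟨hkj, hkS⟩)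
      simp [hw.2.2 k hkS, hu.2.2 k hkS]

end simplexW

section LeastSquares

variable {V E : Type*} [AddCommGroup V] [Module ℝ V] [NormedAddCommGroup E]
  [InnerProductSpace ℝ E] {A : V →ₗ[ℝ] E} {y : E} {S S' : Set V} {w w' v : V}

lemma inner_sub_nonneg_of_isMinOn (hS : Convex ℝ S) (hw : w ∈ S)
    (hmin : IsMinOn (fun v => ‖A v - y‖) S w) (hv : v ∈ S) : 0 ≤ ⟪A w - y, A v - A w⟫ := by
  have : Nonempty (A '' S) := ⟨⟨A w, mem_image_of_mem A hw⟩⟩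
  have hinf : ‖y - A w‖ = ⨅ c : A '' S, ‖y - c‖ := by
    refine le_antisymm (le_ciInf ?_)
      (ciInf_le ⟨0, ?_⟩ (⟨A w, mem_image_of_mem A hw⟩ : A '' S))
    · rintro ⟨_, u, hu, rfl⟩
      rw [norm_sub_rev, norm_sub_rev y]
      exact hmin hu
    · rintro _ ⟨c, rfl⟩
      exact norm_nonneg _
  have := (norm_eq_iInf_iff_real_inner_le_zero (hS.linear_image A)
    (mem_image_of_mem A hw)).1 hinf (A v) (mem_image_of_mem A hv)
  rw [← neg_sub, inner_neg_left] at this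
  linarith

lemma map_eq_of_isMinOn (hS : Convex ℝ S) (hw : w ∈ S) (hv : v ∈ S)
    (hminw : IsMinOn (fun v => ‖A v - y‖) S w) (hminv : IsMinOn (fun v => ‖A v - y‖) S v) :
    A w = A v := by
  have h1 := inner_sub_nonneg_of_isMinOn hS hw hminw hv
  have h2 := inner_sub_nonneg_of_isMinOn hS hv hminv hw
  have h3 := real_inner_self_nonneg (x := A v - A w)
  rw [← sub_eq_zero, ← inner_self_eq_zero (𝕜 := ℝ)]
  simp only [inner_sub_left, inner_sub_right, real_inner_comm] at *
  linarith

lemma inner_sub_eq_zero_of_isMinOn (hS : Convex ℝ S) (hw : w ∈ S)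
    (hmin : IsMinOn (fun v => ‖A v - y‖) S w) (hv : v ∈ S) {t : ℝ} (ht : 0 < t)
    (hext : w + t • (w - v) ∈ S) : ⟪A w - y, A v - A w⟫ = 0 := by
  have h1 := inner_sub_nonneg_of_isMinOn hS hw hmin hv
  have h2 := inner_sub_nonneg_of_isMinOn hS hw hmin hext
  rw [map_add, map_smul, add_sub_cancel_left, map_sub, ← neg_sub (A v), smul_neg,
    inner_neg_right, inner_smul_right] at h2
  nlinarith

lemma inner_sub_nonneg_of_isMinOn_of_subset (hS' : Convex ℝ S') (hSS' : S' ⊆ S)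
    (horth : ∀ v ∈ S, ⟪A w - y, A v - A w⟫ = 0) (hw' : w' ∈ S')
    (hmin' : IsMinOn (fun v => ‖A v - y‖) S' w') (hv : v ∈ S') :
    0 ≤ ⟪A w' - A w, A v - A w⟫ := by
  have h1 := inner_sub_nonneg_of_isMinOn hS' hw' hmin' hv
  have h2 := horth v (hSS' hv)
  have h3 := horth w' (hSS' hw')
  have h4 := real_inner_self_nonneg (x := A w' - A w)
  simp only [inner_sub_left, inner_sub_right, real_inner_comm] at *
  linarith

end LeastSquares

section LeaveOneOut

variable {N : ℕ} {E : Type*} [NormedAddCommGroup E] [InnerProductSpace ℝ E]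
  {A : (Fin N → ℝ) →ₗ[ℝ] E} {y : E} {S J : Finset (Fin N)} {w u : Fin N → ℝ}

lemma inner_sub_eq_zero_of_isMinOn_simplexW (hw : w ∈ simplexW S) (hpos : ∀ i ∈ S, 0 < w i)
    (hmin : IsMinOn (fun v => ‖A v - y‖) (simplexW S) w) (hu : u ∈ simplexW S) :
    ⟪A w - y, A u - A w⟫ = 0 := by
  rcases eq_or_ne u w with rfl | hne
  · simp
  obtain ⟨j, -, t, ht, hext⟩ := simplexW.exists_add_smul_sub_mem_erase hw hpos hu hne
  exact inner_sub_eq_zero_of_isMinOn simplexW.convex hw hmin hu ht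
    (simplexW.mono (S.erase_subset j) hext)

lemma exists_mem_simplexW_norm_sq_le_inner (hS : S.Nonempty) (z : Fin N → E) (y : E) :
    ∃ u ∈ simplexW S, ∀ j ∈ S,
      ‖∑ i ∈ S, u i • z i - y‖ ^ 2 ≤ ⟪∑ i ∈ S, u i • z i - y, z j - y⟫ := by
  let B : (Fin N → ℝ) →ₗ[ℝ] E := ∑ i ∈ S, (LinearMap.proj i).smulRight (z i)
  have hB : ∀ u, B u = ∑ i ∈ S, u i • z i := fun u => by simp [B]
  obtain ⟨j₀, hj₀⟩ := hS
  have hcont : Continuous fun v => ‖B v - y‖ :=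
    (B.continuous_of_finiteDimensional.sub continuous_const).norm
  obtain ⟨u, hu, hmin⟩ :=
    simplexW.isCompact.exists_isMinOn ⟨_, simplexW.single_mem hj₀⟩ hcont.continuousOn
  refine ⟨u, hu, fun j hj => ?_⟩
  have h := inner_sub_nonneg_of_isMinOn simplexW.convex hu hmin (simplexW.single_mem hj)
  have hBj : B (Pi.single j 1) = z j := by simp [hB, Pi.single_apply, hj]
  rw [hBj, hB] at h
  set p := ∑ i ∈ S, u i • z i
  have hsplit : ⟪p - y, z j - y⟫ = ⟪p - y, z j - p⟫ + ‖p - y‖ ^ 2 := by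
    rw [← real_inner_self_eq_norm_sq, ← inner_add_right, sub_add_sub_cancel]
  linarith

variable {wJ : Fin N → ℝ} {wdel : Fin N → Fin N → ℝ}

lemma exists_inner_leaveOneOut_nonpos (hwJ : wJ ∈ simplexW J)
    (hwJmin : IsMinOn (fun v => ‖A v - y‖) (simplexW J) wJ)
    (hwdel : ∀ j ∈ J, wdel j ∈ simplexW (J.erase j))
    (hwdelmin : ∀ j ∈ J, IsMinOn (fun v => ‖A v - y‖) (simplexW (J.erase j)) (wdel j))
    (hu : u ∈ simplexW J) : ∃ j ∈ J, ⟪A (wdel j) - A wJ, A u - A wJ⟫ ≤ 0 := by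
  by_cases hzero : ∃ j ∈ J, wJ j = 0
  · obtain ⟨j, hj, hj0⟩ := hzero
    have hmin := hwJmin.on_subset (simplexW.mono (J.erase_subset j))
    refine ⟨j, hj, ?_⟩
    rw [map_eq_of_isMinOn simplexW.convex (hwdel j hj) (simplexW.mem_erase_of_eq_zero hwJ hj0)
      (hwdelmin j hj) hmin, sub_self, inner_zero_left]
  push Not at hzero
  have hpos : ∀ i ∈ J, 0 < wJ i := fun i hi => (hwJ.1 i).1.lt_of_ne' (hzero i hi)
  rcases eq_or_ne u wJ with rfl | hne
  · obtain ⟨j, hj⟩ := simplexW.nonempty_of_mem hwJ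
    exact ⟨j, hj, by simp⟩
  obtain ⟨j, hj, t, ht, hext⟩ := simplexW.exists_add_smul_sub_mem_erase hwJ hpos hu hne
  have hfacet := inner_sub_nonneg_of_isMinOn_of_subset simplexW.convex
    (simplexW.mono (J.erase_subset j))
    (fun v hv => inner_sub_eq_zero_of_isMinOn_simplexW hwJ hpos hwJmin hv)
    (hwdel j hj) (hwdelmin j hj) hext
  rw [map_add, map_smul, add_sub_cancel_left, map_sub, ← neg_sub (A u), smul_neg,
    inner_neg_right, inner_smul_right] at hfacet
  exact ⟨j, hj, by nlinarith⟩

theorem exists_mem_simplexW_map_eq_sum_smul (hwJ : wJ ∈ simplexW J)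
    (hwJmin : IsMinOn (fun v => ‖A v - y‖) (simplexW J) wJ)
    (hwdel : ∀ j ∈ J, wdel j ∈ simplexW (J.erase j))
    (hwdelmin : ∀ j ∈ J, IsMinOn (fun v => ‖A v - y‖) (simplexW (J.erase j)) (wdel j)) :
    ∃ lam ∈ simplexW J, A wJ = ∑ j ∈ J, lam j • A (wdel j) := by
  obtain ⟨lam, hlam, hnorm⟩ :=
    exists_mem_simplexW_norm_sq_le_inner (simplexW.nonempty_of_mem hwJ) (A ∘ wdel) (A wJ)
  have hwbar : ∑ j ∈ J, lam j • wdel j ∈ simplexW J :=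
    simplexW.convex.sum_mem (fun j _ => (hlam.1 j).1) (simplexW.sum_eq_one hlam)
      fun j hj => simplexW.mono (J.erase_subset j) (hwdel j hj)
  obtain ⟨j, hj, hle⟩ :=
    exists_inner_leaveOneOut_nonpos hwJ hwJmin hwdel hwdelmin hwbar
  simp only [map_sum, map_smul] at hle
  rw [real_inner_comm] at hle
  have hsq := (hnorm j hj).trans hle
  refine ⟨lam, hlam, (sub_eq_zero.1 ?_).symm⟩
  exact norm_eq_zero.1 (pow_eq_zero_iff two_ne_zero |>.1 (le_antisymm hsq (sq_nonneg _)))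

end LeaveOneOut

theorem synth_fitted_model_averaging_general {T N : ℕ}
    (X : Matrix (Fin T) (Fin N) ℝ) (ybar : Fin T → ℝ)
    (J : Finset (Fin N))
    (wJ : Fin N → ℝ) (hwJ : wJ ∈ simplexW J)
    (hwJmin : ∀ w ∈ simplexW J,
      ∑ t, ((X *ᵥ wJ) t - ybar t) ^ 2 ≤ ∑ t, ((X *ᵥ w) t - ybar t) ^ 2)
    (wdel : Fin N → (Fin N → ℝ))
    (hwdel : ∀ j ∈ J, wdel j ∈ simplexW (J.erase j))
    (hwdelmin : ∀ j ∈ J, ∀ w ∈ simplexW (J.erase j),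
      ∑ t, ((X *ᵥ wdel j) t - ybar t) ^ 2 ≤ ∑ t, ((X *ᵥ w) t - ybar t) ^ 2) :
    ∃ lam : Fin N → ℝ, (∀ j ∈ J, 0 ≤ lam j) ∧
      X *ᵥ wJ = ∑ j ∈ J, lam j • (X *ᵥ wdel j) := by
  let A : (Fin N → ℝ) →ₗ[ℝ] EuclideanSpace ℝ (Fin T) :=
    (WithLp.linearEquiv 2 ℝ (Fin T → ℝ)).symm.toLinearMap ∘ₗ X.mulVecLin
  have hnorm : ∀ w, ‖A w - WithLp.toLp 2 ybar‖ ^ 2 = ∑ t, ((X *ᵥ w) t - ybar t) ^ 2 :=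
    fun w => by simp [A, EuclideanSpace.real_norm_sq_eq]
  have hmin : ∀ S w,
      (∀ v ∈ S, ∑ t, ((X *ᵥ w) t - ybar t) ^ 2 ≤ ∑ t, ((X *ᵥ v) t - ybar t) ^ 2) →
      IsMinOn (fun v => ‖A v - WithLp.toLp 2 ybar‖) S w := fun S w h v hv =>
    le_of_pow_le_pow_left₀ two_ne_zero (norm_nonneg _) (by rw [hnorm, hnorm]; exact h v hv)
  obtain ⟨lam, hlam, h⟩ := exists_mem_simplexW_map_eq_sum_smul hwJ (hmin _ _ hwJmin) hwdel
    fun j hj => hmin _ _ (hwdelmin j hj)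
  exact ⟨lam, fun j _ => (hlam.1 j).1, by simpa [A] using congrArg WithLp.ofLp h⟩

/-- Model averaging for synthetic control at the level of fitted values: the
fitted value of the unique constrained projection onto the full simplex lies in
the conical hull of the fitted values of the leave-one-out constrained
projections. -/
theorem synth_fitted_model_averaging {T N : ℕ}
    (X : Matrix (Fin T) (Fin N) ℝ) (ybar : Fin T → ℝ)
    (J : Finset (Fin N)) (hJ : 2 ≤ J.card)
    (wJ : Fin N → ℝ) (hwJ : wJ ∈ simplexW J)
    (hwJmin : ∀ w ∈ simplexW J,
      ∑ t, ((X *ᵥ wJ) t - ybar t) ^ 2 ≤ ∑ t, ((X *ᵥ w) t - ybar t) ^ 2)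
    (hwJuniq : ∀ w ∈ simplexW J,
      (∀ w' ∈ simplexW J,
        ∑ t, ((X *ᵥ w) t - ybar t) ^ 2 ≤ ∑ t, ((X *ᵥ w') t - ybar t) ^ 2) →
      w = wJ)
    (wdel : Fin N → (Fin N → ℝ))
    (hwdel : ∀ j ∈ J, wdel j ∈ simplexW (J.erase j))
    (hwdelmin : ∀ j ∈ J, ∀ w ∈ simplexW (J.erase j),
      ∑ t, ((X *ᵥ wdel j) t - ybar t) ^ 2 ≤ ∑ t, ((X *ᵥ w) t - ybar t) ^ 2)
    (hwdeluniq : ∀ j ∈ J, ∀ w ∈ simplexW (J.erase j),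
      (∀ w' ∈ simplexW (J.erase j),
        ∑ t, ((X *ᵥ w) t - ybar t) ^ 2 ≤ ∑ t, ((X *ᵥ w') t - ybar t) ^ 2) →
      w = wdel j) :
    ∃ lam : Fin N → ℝ, (∀ j ∈ J, 0 ≤ lam j) ∧
      X *ᵥ wJ = ∑ j ∈ J, lam j • (X *ᵥ wdel j) :=
  synth_fitted_model_averaging_general X ybar J wJ hwJ hwJmin wdel hwdel hwdelmin
end

section
/- Model averaging for penalized synthetic control: let X ∈ ℝ^{T×N}, y ∈ ℝ^T, η > 0, and J ⊆ {1,…,N} with |J| ≥ 2. Let ŵ^J_η be the unique minimizer of ‖Xw − y‖² + η‖w‖² over the simplex 𝒲^J, and ŵ^{J∖{j}}_η the unique minimizer over 𝒲^{J∖{j}}. Then there exist λ_j ∈ [0,1] with Σ_{j∈J} λ_j = 1 such that ŵ^J_η = Σ_{j∈J} λ_j ŵ^{J∖{j}}_η. -/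
/-!
Write the objective as `‖A w - z‖²` with `A` linear and, thanks to the ridge term, injective:
each minimizer is then the nearest point of its simplex to `z`. If `wJ` lies on a facet
`𝒲^{J∖{j}}`, it is the minimizer over that facet. Otherwise `wJ` is in the relative interior,
`A wJ` is the orthogonal projection of `z` onto the affine hull of `𝒲^J`, and so every `wdel j`
is the point of its facet nearest to `wJ` itself. If `wJ` were outside the convex hull `C` of the
`wdel j`, let `c` be the point of `C` nearest to `wJ` and move from `wJ` away from `c` until a
facet `𝒲^{J∖{j}}` is hit: the nearest-point inequalities of `wdel j` (on that facet) and of `c`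
(on `C`) are then incompatible.
-/

open Matrix BigOperators

/-- The ridge-penalized synthetic-control objective. -/
def penObj {T N : ℕ} (X : Matrix (Fin T) (Fin N) ℝ) (y : Fin T → ℝ) (η : ℝ)
    (w : Fin N → ℝ) : ℝ :=
  (∑ t, ((X *ᵥ w) t - y t) ^ 2) + η * ∑ i, (w i) ^ 2

open scoped RealInnerProductSpace

section Simplex

variable {N : ℕ} {J : Finset (Fin N)} {w c : Fin N → ℝ}

theorem mem_simplexW_iff :
    w ∈ simplexW J ↔ (∀ i, 0 ≤ w i) ∧ ∑ i, w i = 1 ∧ ∀ j ∉ J, w j = 0 := by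
  refine ⟨fun ⟨hI, hs, hz⟩ => ⟨fun i => (hI i).1, hs, hz⟩, fun ⟨h0, hs, hz⟩ =>
    ⟨fun i => ⟨h0 i, hs ▸ Finset.single_le_sum (fun j _ => h0 j) (Finset.mem_univ i)⟩, hs, hz⟩⟩

theorem simplexW_eq_inter :
    simplexW J = stdSimplex ℝ (Fin N) ∩ {w | ∀ j ∉ J, w j = 0} := by
  ext w
  simp only [mem_simplexW_iff, stdSimplex, Set.mem_inter_iff, Set.mem_ofPred_eq, and_assoc]

theorem simplexW_mono {S S' : Finset (Fin N)} (h : S ⊆ S') : simplexW S ⊆ simplexW S' :=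
  fun _ ⟨hI, hs, hz⟩ => ⟨hI, hs, fun j hj => hz j (fun hjS => hj (h hjS))⟩

theorem convex_simplexW (J : Finset (Fin N)) : Convex ℝ (simplexW J) := by
  rw [simplexW_eq_inter]
  refine (convex_stdSimplex ℝ (Fin N)).inter fun u hu v hv a b _ _ _ j hj => ?_
  simp [hu j hj, hv j hj]

theorem isCompact_simplexW (J : Finset (Fin N)) : IsCompact (simplexW J) := by
  rw [simplexW_eq_inter, Set.ofPred_forall]
  refine (isCompact_stdSimplex ℝ (Fin N)).inter_right <| isClosed_iInter fun j => ?_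
  by_cases hj : j ∈ J
  · simp [hj]
  · simpa [hj] using isClosed_eq (continuous_apply j) continuous_const

theorem single_mem_simplexW {j : Fin N} (hj : j ∈ J) : Pi.single j 1 ∈ simplexW J := by
  rw [simplexW_eq_inter]
  exact ⟨single_mem_stdSimplex ℝ j,
    fun i hi => Pi.single_eq_of_ne (ne_of_mem_of_not_mem hj hi).symm _⟩

theorem mem_simplexW_erase (hw : w ∈ simplexW J) {j : Fin N} (hj : w j = 0) :
    w ∈ simplexW (J.erase j) := by
  refine ⟨hw.1, hw.2.1, fun i hi => ?_⟩
  by_cases hij : i = j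
  · exact hij ▸ hj
  · exact hw.2.2 i fun hiJ => hi (Finset.mem_erase.2 ⟨hij, hiJ⟩)

theorem sum_eq_one_of_mem_simplexW (hw : w ∈ simplexW J) : ∑ j ∈ J, w j = 1 :=
  (Finset.sum_subset J.subset_univ fun i _ hi => hw.2.2 i hi).trans hw.2.1

theorem linearCombination_apply_of_mem_simplexW {E : Type*} [AddCommMonoid E] [Module ℝ E]
    (hw : w ∈ simplexW J) (p : Fin N → E) :
    Fintype.linearCombination ℝ p w = ∑ j ∈ J, w j • p j := by
  rw [Fintype.linearCombination_apply]
  exact (Finset.sum_subset J.subset_univ fun i _ hi => by simp [hw.2.2 i hi]).symm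

theorem exists_add_smul_sub_mem_simplexW_erase (hw : w ∈ simplexW J) (hpos : ∀ i ∈ J, 0 < w i)
    (hc : c ∈ simplexW J) (hcw : c ≠ w) :
    ∃ j ∈ J, ∃ t : ℝ, 0 < t ∧ w + t • (w - c) ∈ simplexW (J.erase j) := by
  rw [mem_simplexW_iff] at hw hc
  obtain ⟨hw0, hw1, hwJ⟩ := hw
  obtain ⟨hc0, hc1, hcJ⟩ := hc
  have hS : (J.filter fun i => w i < c i).Nonempty := by
    by_contra h
    rw [Finset.not_nonempty_iff_eq_empty, Finset.filter_eq_empty_iff] at h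
    have hle : ∀ i ∈ Finset.univ, c i ≤ w i := fun i _ => by
      by_cases hi : i ∈ J
      · exact not_lt.1 (h hi)
      · simp [hwJ i hi, hcJ i hi]
    exact hcw <| funext fun i =>
      (Finset.sum_eq_sum_iff_of_le hle).1 (hc1.trans hw1.symm) i (Finset.mem_univ i)
  obtain ⟨j, hjS, hjt⟩ := Finset.exists_mem_eq_inf' hS fun i => w i / (c i - w i)
  obtain ⟨hjJ, hwcj⟩ := Finset.mem_filter.1 hjS
  set t := w j / (c j - w j) with ht
  have htpos : 0 < t := div_pos (hpos j hjJ) (sub_pos.2 hwcj)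
  refine ⟨j, hjJ, t, htpos, mem_simplexW_iff.2 ⟨fun i => ?_, ?_, fun i hi => ?_⟩⟩
  · simp only [Pi.add_apply, Pi.smul_apply, Pi.sub_apply, smul_eq_mul]
    rcases lt_or_ge (w i) (c i) with hwc | hcw
    · have hiJ : i ∈ J := by
        by_contra hiJ
        simp [hwJ i hiJ, hcJ i hiJ] at hwc
      have hti : t ≤ w i / (c i - w i) :=
        hjt ▸ Finset.inf'_le _ (Finset.mem_filter.2 ⟨hiJ, hwc⟩)
      rw [le_div_iff₀ (sub_pos.2 hwc)] at hti
      linarith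
    · nlinarith [hw0 i]
  · simp [Finset.sum_add_distrib, Finset.sum_sub_distrib, ← Finset.mul_sum, hw1, hc1]
  · simp only [Pi.add_apply, Pi.smul_apply, Pi.sub_apply, smul_eq_mul]
    by_cases hij : i = j
    · subst hij
      rw [ht]
      field_simp [(sub_pos.2 hwcj).ne']
      ring
    · have hiJ : i ∉ J := fun hiJ => hi (Finset.mem_erase.2 ⟨hij, hiJ⟩)
      simp [hwJ i hiJ, hcJ i hiJ]

end Simplex

section Projection

variable {V H : Type*} [AddCommGroup V] [Module ℝ V] [NormedAddCommGroup H]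
  [InnerProductSpace ℝ H] {A : V →ₗ[ℝ] H} {z : H} {K : Set V} {w w' : V}

theorem inner_sub_le_zero_of_isMinOn (hK : Convex ℝ K) (hw : w ∈ K)
    (hmin : IsMinOn (fun u => ‖A u - z‖) K w) : ∀ u ∈ K, ⟪z - A w, A u - A w⟫ ≤ 0 := by
  have hAw : A w ∈ A '' K := Set.mem_image_of_mem A hw
  have : Nonempty (A '' K) := ⟨⟨A w, hAw⟩⟩
  have hinf : ‖z - A w‖ = ⨅ x : A '' K, ‖z - x‖ := by
    have hbdd : BddBelow (Set.range fun x : A '' K => ‖z - x‖) :=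
      ⟨0, by rintro _ ⟨x, rfl⟩; exact norm_nonneg _⟩
    refine le_antisymm (le_ciInf ?_) (ciInf_le hbdd ⟨A w, hAw⟩)
    rintro ⟨_, u, hu, rfl⟩
    simpa only [norm_sub_rev] using isMinOn_iff.1 hmin u hu
  exact fun u hu => (norm_eq_iInf_iff_real_inner_le_zero (hK.linear_image A) hAw).1 hinf _
    (Set.mem_image_of_mem A hu)

theorem eq_of_isMinOn (hA : Function.Injective A) (hK : Convex ℝ K) (hw : w ∈ K) (hw' : w' ∈ K)
    (hmin : IsMinOn (fun u => ‖A u - z‖) K w) (hmin' : IsMinOn (fun u => ‖A u - z‖) K w') :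
    w = w' := by
  have h := inner_sub_le_zero_of_isMinOn hK hw hmin w' hw'
  have h' := inner_sub_le_zero_of_isMinOn hK hw' hmin' w hw
  have hsq : ‖A w' - A w‖ ^ 2 ≤ 0 := by
    rw [← real_inner_self_eq_norm_sq]
    simp only [inner_sub_left, inner_sub_right, real_inner_comm] at h h' ⊢
    linarith
  exact hA (sub_eq_zero.1 (norm_le_zero_iff.1 (by nlinarith [norm_nonneg (A w' - A w)]))).symm

end Projection

section FacetProjections

variable {N : ℕ} {H : Type*} [NormedAddCommGroup H] [InnerProductSpace ℝ H]
  {A : (Fin N → ℝ) →ₗ[ℝ] H} {J : Finset (Fin N)} {w : Fin N → ℝ}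

theorem inner_sub_eq_zero_of_forall_pos {g : H} (hw : w ∈ simplexW J) (hpos : ∀ i ∈ J, 0 < w i)
    (hvar : ∀ u ∈ simplexW J, ⟪g, A u - A w⟫ ≤ 0) : ∀ u ∈ simplexW J, ⟪g, A u - A w⟫ = 0 := by
  intro u hu
  refine le_antisymm (hvar u hu) ?_
  rcases eq_or_ne u w with rfl | huw
  · simp
  obtain ⟨j, -, t, ht, hmem⟩ := exists_add_smul_sub_mem_simplexW_erase hw hpos hu huw
  have h := hvar _ (simplexW_mono (J.erase_subset j) hmem)
  rw [map_add, map_smul, map_sub, add_sub_cancel_left, ← neg_sub, smul_neg, inner_neg_right,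
    inner_smul_right] at h
  nlinarith

theorem mem_image_linearCombination_of_facet_projections (hA : Function.Injective A)
    {p : Fin N → Fin N → ℝ} (hw : w ∈ simplexW J) (hpos : ∀ i ∈ J, 0 < w i)
    (hp : ∀ j ∈ J, p j ∈ simplexW (J.erase j))
    (hproj : ∀ j ∈ J, ∀ u ∈ simplexW (J.erase j), ⟪A w - A (p j), A u - A (p j)⟫ ≤ 0) :
    w ∈ Fintype.linearCombination ℝ p '' simplexW J := by
  set C := Fintype.linearCombination ℝ p '' simplexW J
  have hpC : ∀ j ∈ J, p j ∈ C := fun j hj => ⟨Pi.single j 1, single_mem_simplexW hj, by simp⟩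
  have hCsub : C ⊆ simplexW J := by
    rintro _ ⟨lam, hlam, rfl⟩
    rw [linearCombination_apply_of_mem_simplexW hlam]
    exact (convex_simplexW J).sum_mem (fun i _ => (hlam.1 i).1) (sum_eq_one_of_mem_simplexW hlam)
      fun j hj => simplexW_mono (J.erase_subset j) (hp j hj)
  have hdist : Continuous fun u => ‖A u - A w‖ :=
    (A.continuous_of_finiteDimensional.sub continuous_const).norm
  obtain ⟨c, hcC, hcmin⟩ := ((isCompact_simplexW J).image
      (Fintype.linearCombination ℝ p).continuous_of_finiteDimensional).exists_isMinOn
    ⟨_, Set.mem_image_of_mem _ hw⟩ hdist.continuousOn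
  by_contra hwC
  have hcw : c ≠ w := ne_of_mem_of_not_mem hcC hwC
  have hvar := inner_sub_le_zero_of_isMinOn ((convex_simplexW J).linear_image _) hcC hcmin
  obtain ⟨j, hj, t, ht, hmem⟩ :=
    exists_add_smul_sub_mem_simplexW_erase hw hpos (hCsub hcC) hcw
  have h1 := hproj j hj _ hmem
  have h2 := hvar _ (hpC j hj)
  have hb : A w - A c ≠ 0 := sub_ne_zero.2 (hA.ne hcw.symm)
  set a := A w - A (p j)
  set b := A w - A c
  have e1 : A (w + t • (w - c)) - A (p j) = a + t • b := by
    simp only [map_add, map_smul, map_sub, a, b]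
    abel
  have e2 : A (p j) - A c = b - a := by
    simp only [a, b]
    abel
  rw [e1, inner_add_right, inner_smul_right] at h1
  rw [e2, inner_sub_right, real_inner_comm a b] at h2
  nlinarith [real_inner_self_nonneg (x := a), real_inner_self_pos.2 hb]

end FacetProjections

theorem exists_injective_penObj_eq_norm_sq {T N : ℕ} (X : Matrix (Fin T) (Fin N) ℝ)
    (y : Fin T → ℝ) {η : ℝ} (hη : 0 < η) :
    ∃ (A : (Fin N → ℝ) →ₗ[ℝ] EuclideanSpace ℝ (Fin T ⊕ Fin N))
      (z : EuclideanSpace ℝ (Fin T ⊕ Fin N)),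
      Function.Injective A ∧ ∀ w, penObj X y η w = ‖A w - z‖ ^ 2 := by
  let A : (Fin N → ℝ) →ₗ[ℝ] EuclideanSpace ℝ (Fin T ⊕ Fin N) :=
    { toFun := fun w => WithLp.toLp 2 (Sum.elim (X *ᵥ w) (√η • w))
      map_add' := fun u v => by ext (t | i) <;> simp [mulVec_add]
      map_smul' := fun c u => by ext (t | i) <;> simp [mulVec_smul, mul_left_comm] }
  refine ⟨A, WithLp.toLp 2 (Sum.elim y 0),
    (injective_iff_map_eq_zero A).2 fun w hw => ?_, fun w => ?_⟩
  · funext i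
    have := congrArg (fun x => x (Sum.inr i)) hw
    simpa [A, (Real.sqrt_pos.2 hη).ne'] using this
  · rw [EuclideanSpace.real_norm_sq_eq, Fintype.sum_sum_type]
    simp [A, penObj, mul_pow, Real.sq_sqrt hη.le, Finset.mul_sum]

theorem penalized_synth_model_averaging_general {T N : ℕ}
    (X : Matrix (Fin T) (Fin N) ℝ) (y : Fin T → ℝ) (η : ℝ) (hη : 0 < η)
    (J : Finset (Fin N))
    (wJ : Fin N → ℝ) (hwJ : wJ ∈ simplexW J)
    (hwJmin : ∀ w ∈ simplexW J, penObj X y η wJ ≤ penObj X y η w)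
    (wdel : Fin N → (Fin N → ℝ))
    (hwdel : ∀ j ∈ J, wdel j ∈ simplexW (J.erase j))
    (hwdelmin : ∀ j ∈ J, ∀ w ∈ simplexW (J.erase j),
      penObj X y η (wdel j) ≤ penObj X y η w) :
    ∃ lam : Fin N → ℝ,
      (∀ j ∈ J, lam j ∈ Set.Icc (0 : ℝ) 1) ∧
      (∑ j ∈ J, lam j = 1) ∧
      wJ = ∑ j ∈ J, lam j • wdel j := by
  obtain ⟨A, z, hA, hpen⟩ := exists_injective_penObj_eq_norm_sq X y hη
  have hmin : ∀ {K : Set (Fin N → ℝ)} {w}, (∀ u ∈ K, penObj X y η w ≤ penObj X y η u) →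
      IsMinOn (fun u => ‖A u - z‖) K w := fun h => isMinOn_iff.2 fun u hu =>
    (sq_le_sq₀ (norm_nonneg _) (norm_nonneg _)).1 (by simpa only [hpen] using h u hu)
  have hvar_del (j) (hj : j ∈ J) :=
    inner_sub_le_zero_of_isMinOn (convex_simplexW _) (hwdel j hj) (hmin (hwdelmin j hj))
  obtain ⟨lam, hlam, hcomb⟩ : wJ ∈ Fintype.linearCombination ℝ wdel '' simplexW J := by
    by_cases hpos : ∀ j ∈ J, 0 < wJ j
    · have hperp := inner_sub_eq_zero_of_forall_pos hwJ hpos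
        (inner_sub_le_zero_of_isMinOn (convex_simplexW J) hwJ (hmin hwJmin))
      refine mem_image_linearCombination_of_facet_projections hA hwJ hpos hwdel fun j hj u hu => ?_
      -- `A wJ` is the orthogonal projection of `z` onto the affine hull of the simplex, so
      -- `A (wdel j)` is also the point of the facet nearest to `A wJ`.
      have h1 := hvar_del j hj u hu
      have h2 := hperp u (simplexW_mono (J.erase_subset j) hu)
      have h3 := hperp _ (simplexW_mono (J.erase_subset j) (hwdel j hj))
      simp only [inner_sub_left, inner_sub_right] at h1 h2 h3 ⊢
      linarith
    · push Not at hpos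
      obtain ⟨j, hj, hwj⟩ := hpos
      have hwJj := mem_simplexW_erase hwJ (le_antisymm hwj (hwJ.1 j).1)
      have : wdel j = wJ := eq_of_isMinOn hA (convex_simplexW _) (hwdel j hj) hwJj
        (hmin (hwdelmin j hj)) (hmin fun u hu => hwJmin u (simplexW_mono (J.erase_subset j) hu))
      exact ⟨Pi.single j 1, single_mem_simplexW hj, by simp [this]⟩
  refine ⟨lam, fun j _ => hlam.1 j, sum_eq_one_of_mem_simplexW hlam, ?_⟩
  rw [← hcomb, linearCombination_apply_of_mem_simplexW hlam]

/-- Model averaging for penalized synthetic control: the penalized solution on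
donor set `J` is a convex combination of the penalized leave-one-out
solutions. -/
theorem penalized_synth_model_averaging {T N : ℕ}
    (X : Matrix (Fin T) (Fin N) ℝ) (y : Fin T → ℝ) (η : ℝ) (hη : 0 < η)
    (J : Finset (Fin N)) (hJ : 2 ≤ J.card)
    (wJ : Fin N → ℝ) (hwJ : wJ ∈ simplexW J)
    (hwJmin : ∀ w ∈ simplexW J, penObj X y η wJ ≤ penObj X y η w)
    (wdel : Fin N → (Fin N → ℝ))
    (hwdel : ∀ j ∈ J, wdel j ∈ simplexW (J.erase j))
    (hwdelmin : ∀ j ∈ J, ∀ w ∈ simplexW (J.erase j),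
      penObj X y η (wdel j) ≤ penObj X y η w) :
    ∃ lam : Fin N → ℝ,
      (∀ j ∈ J, lam j ∈ Set.Icc (0 : ℝ) 1) ∧
      (∑ j ∈ J, lam j = 1) ∧
      wJ = ∑ j ∈ J, lam j • wdel j :=
  penalized_synth_model_averaging_general X y η hη J wJ hwJ hwJmin wdel hwdel hwdelmin
end

section
/- Limit of ridge-penalized simplex least squares is the minimum-norm simplex least-squares solution: let X ∈ ℝ^{T×N}, y ∈ ℝ^T, and 𝒲 the standard simplex in ℝ^N. For η > 0 let w_η = argmin_{w∈𝒲} ‖Xw − y‖² + η‖w‖², and let w* = argmin_{w ∈ 𝒲̂} ‖w‖ where 𝒲̂ = argmin_{w∈𝒲} ‖Xw − y‖². Then w_η → w* as η → 0⁺. -/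
open Matrix BigOperators Filter Topology

/-- The standard simplex in `ℝ^N`. -/
def stdSimplex' (N : ℕ) : Set (Fin N → ℝ) :=
  {w | (∀ i, w i ∈ Set.Icc (0 : ℝ) 1) ∧ (∑ i, w i) = 1}

/-!
Proof idea. Let `f` be the least-squares loss and `r = ‖·‖²` the ridge penalty. Comparing
`w_η` with `w*` in both problems gives `r w_η ≤ r w*` and `f w_η ≤ f w* + η r w*`, so every
cluster point of `w_η` as `η → 0⁺` (there are some, the simplex being compact) minimizes `f`
and has penalty at most `r w*`. Since `f` is convex and `r` strictly convex, the minimizers of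
`f` form a convex set on which `r` has only one minimizer, namely `w*`; hence `w_η → w*`.
-/

section Tikhonov

variable {E : Type*} {K : Set E} {f r : E → ℝ} {η : ℝ} {w x : E}

lemma penalty_le_of_isMinOn_add_smul (hη : 0 < η) (hwK : w ∈ K) (hw : IsMinOn (f + η • r) K w)
    (hxK : x ∈ K) (hx : IsMinOn f K x) : r w ≤ r x := by
  have hpen : f w + η * r w ≤ f x + η * r x := hw hxK
  have hloss : f x ≤ f w := hx hwK
  exact le_of_mul_le_mul_left (by linarith) hη

lemma loss_le_of_isMinOn_add_smul (hr : 0 ≤ η * r w) (hw : IsMinOn (f + η • r) K w)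
    (hxK : x ∈ K) : f w ≤ f x + η * r x := by
  have hpen : f w + η * r w ≤ f x + η * r x := hw hxK
  linarith

variable [TopologicalSpace E] {wη : ℝ → E}

lemma isMinOn_and_le_of_mapClusterPt (hf : Continuous f) (hr : Continuous r)
    (hr0 : ∀ x ∈ K, 0 ≤ r x) (hwη : ∀ η > 0, wη η ∈ K ∧ IsMinOn (f + η • r) K (wη η))
    (hxK : x ∈ K) (hx : IsMinOn f K x) {z : E} (hz : MapClusterPt z (𝓝[>] 0) wη) :
    IsMinOn f K z ∧ r z ≤ r x := by
  have hev : ∀ᶠ η in 𝓝[>] (0 : ℝ), 0 < η ∧ wη η ∈ K ∧ IsMinOn (f + η • r) K (wη η) :=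
    eventually_nhdsWithin_of_forall fun η hη => ⟨hη, hwη η hη⟩
  refine ⟨?_, (isClosed_le hr continuous_const).mem_of_mapClusterPt hz ?_⟩
  · have hfz : f z ≤ f x := le_of_forall_pos_le_add fun ε hε => by
      have hlim : Tendsto (fun η => η * r x) (𝓝[>] 0) (𝓝 0) :=
        tendsto_nhdsWithin_of_tendsto_nhds (by simpa using (continuous_mul_const (r x)).tendsto 0)
      refine (isClosed_le hf continuous_const).mem_of_mapClusterPt hz ?_
      filter_upwards [hev, hlim.eventually_le_const hε] with η ⟨hη, hwK, hw⟩ hsmall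
      have := loss_le_of_isMinOn_add_smul (mul_nonneg hη.le (hr0 _ hwK)) hw hxK
      linarith
    exact isMinOn_iff.2 fun y hy => hfz.trans (hx hy)
  · filter_upwards [hev] with η ⟨hη, hwK, hw⟩
    exact penalty_le_of_isMinOn_add_smul hη hwK hw hxK hx

theorem tendsto_nhds_of_isMinOn_add_smul (hK : IsCompact K) (hf : Continuous f)
    (hr : Continuous r) (hr0 : ∀ x ∈ K, 0 ≤ r x)
    (hwη : ∀ η > 0, wη η ∈ K ∧ IsMinOn (f + η • r) K (wη η))
    (hxK : x ∈ K) (hx : IsMinOn f K x) (huniq : ∀ z ∈ K, IsMinOn f K z → r z ≤ r x → z = x) :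
    Tendsto wη (𝓝[>] 0) (𝓝 x) :=
  hK.tendsto_nhds_of_unique_mapClusterPt
    (eventually_nhdsWithin_of_forall fun η hη => (hwη η hη).1) fun z hzK hz =>
    let ⟨hzf, hzr⟩ := isMinOn_and_le_of_mapClusterPt hf hr hr0 hwη hxK hx hz
    huniq z hzK hzf hzr

end Tikhonov

lemma StrictConvexOn.eq_of_isMinOn_argmin {E : Type*} [AddCommGroup E] [Module ℝ E]
    {K : Set E} {f r : E → ℝ} (hr : StrictConvexOn ℝ K r) (hf : ConvexOn ℝ K f) {x z : E}
    (hxK : x ∈ K) (hx : IsMinOn f K x) (hxr : ∀ y ∈ K, IsMinOn f K y → r x ≤ r y)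
    (hzK : z ∈ K) (hz : IsMinOn f K z) (hzr : r z ≤ r x) : z = x := by
  set S := {y ∈ K | f y ≤ f x}
  have hrS : StrictConvexOn ℝ S r := hr.subset (Set.sep_subset _ _) (hf.convex_le _)
  have hxS : IsMinOn r S x := isMinOn_iff.2 fun y ⟨hyK, hy⟩ =>
    hxr y hyK (isMinOn_iff.2 fun u hu => hy.trans (hx hu))
  have hzS : IsMinOn r S z := isMinOn_iff.2 fun y hy => hzr.trans (hxS hy)
  exact hrS.eq_of_isMinOn hzS hxS ⟨hzK, hz hxK⟩ ⟨hxK, le_rfl⟩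

lemma strictConvexOn_sum_sq {ι : Type*} [Fintype ι] :
    StrictConvexOn ℝ Set.univ fun w : ι → ℝ => ∑ i, w i ^ 2 := by
  refine ⟨convex_univ, fun x _ y _ hxy a b ha hb hab => ?_⟩
  obtain ⟨i, hi⟩ := Function.ne_iff.1 hxy
  have hpos : 0 < ∑ i, (x i - y i) ^ 2 :=
    Finset.sum_pos' (fun _ _ => sq_nonneg _)
      ⟨i, Finset.mem_univ _, sq_pos_of_ne_zero (sub_ne_zero.2 hi)⟩
  obtain rfl : b = 1 - a := by linarith
  have hgap : a • (∑ i, x i ^ 2) + (1 - a) • (∑ i, y i ^ 2)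
      = (∑ i, (a • x + (1 - a) • y) i ^ 2) + a * (1 - a) * ∑ i, (x i - y i) ^ 2 := by
    simp only [smul_eq_mul, Pi.add_apply, Pi.smul_apply, Finset.mul_sum, ← Finset.sum_add_distrib]
    exact Finset.sum_congr rfl fun _ _ => by ring
  rw [hgap]
  have := mul_pos (mul_pos ha hb) hpos
  linarith

section LeastSquares

variable {m n : Type*} [Fintype m] [Fintype n]

def lsqLoss (X : Matrix m n ℝ) (y : m → ℝ) (w : n → ℝ) : ℝ :=
  ∑ t, ((X *ᵥ w) t - y t) ^ 2

lemma continuous_lsqLoss (X : Matrix m n ℝ) (y : m → ℝ) : Continuous (lsqLoss X y) := by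
  unfold lsqLoss; fun_prop

lemma convexOn_lsqLoss (X : Matrix m n ℝ) (y : m → ℝ) : ConvexOn ℝ Set.univ (lsqLoss X y) := by
  exact strictConvexOn_sum_sq.convexOn.comp_affineMap
    (X.mulVecLin.toAffineMap - AffineMap.const ℝ _ y)

end LeastSquares

lemma penObj_eq {T N : ℕ} (X : Matrix (Fin T) (Fin N) ℝ) (y : Fin T → ℝ) (η : ℝ) :
    penObj X y η = lsqLoss X y + η • fun w => ∑ i, w i ^ 2 :=
  rfl

lemma stdSimplex'_eq (N : ℕ) : stdSimplex' N = stdSimplex ℝ (Fin N) := by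
  ext w
  refine ⟨fun ⟨hw, hsum⟩ => ⟨fun i => (hw i).1, hsum⟩, fun ⟨hw, hsum⟩ => ⟨fun i => ⟨hw i, ?_⟩, hsum⟩⟩
  exact hsum ▸ Finset.single_le_sum (fun j _ => hw j) (Finset.mem_univ i)

/-- As the ridge penalty vanishes, the penalized simplex least-squares solutions
converge to the minimum-norm element of the set of simplex least-squares
minimizers. -/
theorem ridge_limit_min_norm {T N : ℕ}
    (X : Matrix (Fin T) (Fin N) ℝ) (y : Fin T → ℝ)
    (wfun : ℝ → (Fin N → ℝ))
    (hwmem : ∀ η > (0 : ℝ), wfun η ∈ stdSimplex' N)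
    (hwmin : ∀ η > (0 : ℝ), ∀ w ∈ stdSimplex' N, penObj X y η (wfun η) ≤ penObj X y η w)
    (wstar : Fin N → ℝ) (hstarmem : wstar ∈ stdSimplex' N)
    (hstarmin : ∀ w ∈ stdSimplex' N,
      ∑ t, ((X *ᵥ wstar) t - y t) ^ 2 ≤ ∑ t, ((X *ᵥ w) t - y t) ^ 2)
    (hstarnorm : ∀ w ∈ stdSimplex' N,
      (∀ w' ∈ stdSimplex' N,
        ∑ t, ((X *ᵥ w) t - y t) ^ 2 ≤ ∑ t, ((X *ᵥ w') t - y t) ^ 2) →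
      ∑ i, (wstar i) ^ 2 ≤ ∑ i, (w i) ^ 2) :
    Tendsto wfun (nhdsWithin 0 (Set.Ioi 0)) (nhds wstar) := by
  have hconv : Convex ℝ (stdSimplex' N) := stdSimplex'_eq N ▸ convex_stdSimplex ℝ (Fin N)
  have hcpt : IsCompact (stdSimplex' N) := stdSimplex'_eq N ▸ isCompact_stdSimplex ℝ (Fin N)
  refine tendsto_nhds_of_isMinOn_add_smul hcpt (continuous_lsqLoss X y) (by fun_prop)
    (fun w _ => Finset.sum_nonneg fun i _ => sq_nonneg (w i))
    (fun η hη => ⟨hwmem η hη, penObj_eq X y η ▸ isMinOn_iff.2 (hwmin η hη)⟩)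
    hstarmem (isMinOn_iff.2 hstarmin) fun z hz hzf hzr => ?_
  exact (strictConvexOn_sum_sq.subset (Set.subset_univ _) hconv).eq_of_isMinOn_argmin
    ((convexOn_lsqLoss X y).subset (Set.subset_univ _) hconv) hstarmem (isMinOn_iff.2 hstarmin)
    (fun w hw hwf => hstarnorm w hw (isMinOn_iff.1 hwf)) hz hzf hzr
end
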